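/- arXiv:2602.05274 — 8 statements merged into one kernel-verified Lean document; each statement's English description precedes it below -/
import Mathlib

section
/- (Objective Species Theorem) Let G be an infinite biosphere and let S_1, S_2 be infinite specieslike clusters in G. If gen(S_1) ∩ gen(S_2) is infinite, then S_1 ~ S_2, i.e., the symmetric difference gen(S_1) △ gen(S_2) is finite. -/
/-- An infinite biosphere: a directed graph on vertex type `V` with a
birthdate function `t`, such that parents are born before children, only
finitely many organisms are born before any given time, every vertex has
finitely many children, and the vertex set is infinite. -/
structure InfiniteBiosphere (V : Type) where
  Edge : V → V → Prop
  t : V → ℝ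
  edge_t : ∀ v w : V, Edge v w → t v < t w
  finite_early : ∀ r : ℝ, {v : V | t v < r}.Finite
  finite_children : ∀ v : V, {w : V | Edge v w}.Finite
  infinite_verts : Infinite V

namespace InfiniteBiosphere

variable {V : Type}

/-- `v` is an ancestor of `w`: there is a directed path of length ≥ 1 from `v` to `w`. -/
def Ancestor (G : InfiniteBiosphere V) (v w : V) : Prop :=
  Relation.TransGen G.Edge v w

/-- The identical ancestor point axiom: for every `v ∈ S`, either all but
finitely many members of `S` are descendants of `v`, or all but finitely many
members of `S` are non-descendants of `v`. -/
def IAP (G : InfiniteBiosphere V) (S : Set V) : Prop :=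
  ∀ v ∈ S, {w ∈ S | ¬ G.Ancestor v w}.Finite ∨ {w ∈ S | G.Ancestor v w}.Finite

/-- The convexity axiom: any vertex with an ancestor in `S` and a descendant in `S` is in `S`. -/
def Convex (G : InfiniteBiosphere V) (S : Set V) : Prop :=
  ∀ v : V, (∃ a ∈ S, G.Ancestor a v) → (∃ d ∈ S, G.Ancestor v d) → v ∈ S

/-- `v` is a generator of `S`: `v ∈ S` and `S` contains at most finitely many
non-descendants of `v`. -/
def IsGenerator (G : InfiniteBiosphere V) (S : Set V) (v : V) : Prop :=
  v ∈ S ∧ {w ∈ S | ¬ G.Ancestor v w}.Finite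

/-- The set of generators of `S`. -/
def gen (G : InfiniteBiosphere V) (S : Set V) : Set V :=
  {v : V | G.IsGenerator S v}

/-- `S` is connected as a subgraph of `G`, ignoring edge directions. -/
def ConnectedSet (G : InfiniteBiosphere V) (S : Set V) : Prop :=
  ∀ a ∈ S, ∀ b ∈ S,
    Relation.ReflTransGen (fun x y => (G.Edge x y ∨ G.Edge y x) ∧ x ∈ S ∧ y ∈ S) a b

/-- A specieslike cluster: a connected set satisfying the identical ancestor
point axiom and the convexity axiom. -/
def SpecieslikeCluster (G : InfiniteBiosphere V) (S : Set V) : Prop :=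
  G.ConnectedSet S ∧ G.IAP S ∧ G.Convex S

/-- The common ancestor property: some `v ∈ S` is an ancestor of every other member of `S`. -/
def CommonAncestorProp (G : InfiniteBiosphere V) (S : Set V) : Prop :=
  ∃ v ∈ S, ∀ w ∈ S, w ≠ v → G.Ancestor v w

/-- The reflection property: every member of `S` with infinitely many
descendants in `G` has infinitely many descendants in `S`. -/
def ReflectionProp (G : InfiniteBiosphere V) (S : Set V) : Prop :=
  ∀ v ∈ S, {w : V | G.Ancestor v w}.Infinite → {w ∈ S | G.Ancestor v w}.Infinite

end InfiniteBiosphere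

/-- `T` is upward generic: the union of any ascending chain of nonempty sets
from `T`, indexed by a nonempty linear order, is in `T`. -/
def UpwardGeneric {V : Type} (T : Set (Set V)) : Prop :=
  ∀ (X : Type) [LinearOrder X] [Nonempty X] (C : X → Set V),
    (∀ a b : X, a < b → C a ⊆ C b) →
    (∀ a : X, (C a).Nonempty) →
    (∀ a : X, C a ∈ T) →
    (⋃ a : X, C a) ∈ T

/-- `T` is downward generic: the intersection of any descending chain of
nonempty sets from `T`, indexed by a nonempty linear order, is in `T`. -/
def DownwardGeneric {V : Type} (T : Set (Set V)) : Prop :=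
  ∀ (X : Type) [LinearOrder X] [Nonempty X] (C : X → Set V),
    (∀ a b : X, a < b → C b ⊆ C a) →
    (∀ a : X, (C a).Nonempty) →
    (∀ a : X, C a ∈ T) →
    (⋂ a : X, C a) ∈ T


lemma gen_diff_finite {V : Type} (G : InfiniteBiosphere V)
    (S1 S2 : Set V) (hconv : G.Convex S2)
    (hinter : (G.gen S1 ∩ G.gen S2).Infinite) :
    (G.gen S1 \ G.gen S2).Finite := by
  obtain ⟨a0, ha0⟩ := hinter.nonempty
  have ha1 : G.IsGenerator S1 a0 := ha0.1
  have ha2 : G.IsGenerator S2 a0 := ha0.2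
  apply ha1.2.subset
  rintro u ⟨hu1, hu2⟩
  have hu1' : G.IsGenerator S1 u := hu1
  obtain ⟨v, hvI, hvne⟩ := (hinter.diff hu1'.2).nonempty
  have hvS1 : v ∈ S1 := hvI.1.1
  have hanc_uv : G.Ancestor u v := by
    by_contra h
    exact hvne ⟨hvS1, h⟩
  have hfin2 : {w ∈ S2 | ¬ G.Ancestor u w}.Finite := by
    apply hvI.2.2.subset
    rintro w ⟨hw, hnw⟩
    exact ⟨hw, fun h => hnw (Relation.TransGen.trans hanc_uv h)⟩
  refine ⟨hu1'.1, fun hanc => ?_⟩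
  exact hu2 ⟨hconv u ⟨a0, ha2.1, hanc⟩ ⟨v, hvI.2.1, hanc_uv⟩, hfin2⟩

/-- Objective Species Theorem: two infinite specieslike clusters whose
generator-sets have infinite intersection have generator-sets with finite
symmetric difference. -/
theorem objective_species_theorem {V : Type} (G : InfiniteBiosphere V)
    (S1 S2 : Set V) (h1 : S1.Infinite) (h2 : S2.Infinite)
    (hc1 : G.SpecieslikeCluster S1) (hc2 : G.SpecieslikeCluster S2)
    (hinter : (G.gen S1 ∩ G.gen S2).Infinite) :
    (symmDiff (G.gen S1) (G.gen S2)).Finite := by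
  rw [Set.symmDiff_def]
  exact (gen_diff_finite G S1 S2 hc2.2.2 hinter).union
    (gen_diff_finite G S2 S1 hc1.2.2 (by rwa [Set.inter_comm] at hinter))
end

section
/- Let G be an infinite biosphere. Then the set CA of all subsets of G having the common ancestor property is upward generic. -/
/-- The set of all subsets of `G` having the common ancestor property is upward generic. -/
theorem ca_upwardGeneric {V : Type} (G : InfiniteBiosphere V) :
    UpwardGeneric {S : Set V | G.CommonAncestorProp S} := by
  intro X _ _ C hmono hne hT
  classical
  simp only [Set.mem_setOf_eq, InfiniteBiosphere.CommonAncestorProp] at hT ⊢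
  choose v hvmem hvanc using hT
  obtain ⟨a0⟩ := ‹Nonempty X›
  have anc_t : ∀ x y : V, G.Ancestor x y → G.t x < G.t y := by
    intro x y h
    induction h with
    | single h => exact G.edge_t _ _ h
    | tail _ h ih => exact ih.trans (G.edge_t _ _ h)
  have key : ∀ a b : X, a < b → v b = v a ∨ G.Ancestor (v b) (v a) := by
    intro a b hab
    rcases eq_or_ne (v a) (v b) with h | h
    · exact Or.inl h.symm
    · exact Or.inr (hvanc b (v a) (hmono a b hab (hvmem a)) h)
  set F : Set V := v '' {b : X | a0 ≤ b} with hF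
  have hFfin : F.Finite := by
    apply (G.finite_early (G.t (v a0) + 1)).subset
    rintro x ⟨b, hb, rfl⟩
    rcases eq_or_lt_of_le (hb : a0 ≤ b) with h | h
    · simp [← h]
    · rcases key a0 b h with h' | h'
      · rw [h']; simp
      · have := anc_t _ _ h'
        simp only [Set.mem_setOf_eq]; linarith
  have hFne : F.Nonempty := ⟨v a0, a0, le_refl a0, rfl⟩
  obtain ⟨m, hmF, hmin⟩ := Set.exists_min_image F G.t hFfin hFne
  obtain ⟨b0, hb0, rfl⟩ := hmF
  have heq : ∀ c : X, b0 < c → v c = v b0 := by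
    intro c hc
    rcases key b0 c hc with h | h
    · exact h
    · exfalso
      have h1 := anc_t _ _ h
      have h2 := hmin (v c) ⟨c, hb0.trans hc.le, rfl⟩
      linarith
  refine ⟨v b0, Set.mem_iUnion.2 ⟨b0, hvmem b0⟩, ?_⟩
  intro w hw hwne
  obtain ⟨c, hwc⟩ := Set.mem_iUnion.1 hw
  rcases le_or_gt c b0 with h | h
  · have : w ∈ C b0 := by
      rcases eq_or_lt_of_le h with h | h
      · exact h ▸ hwc
      · exact hmono c b0 h hwc
    exact hvanc b0 w this hwne
  · have := heq c h
    exact this ▸ hvanc c w hwc (by rw [this]; exact hwne)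
end

section
/- Let G be an infinite biosphere. Then IAP ∩ CONV ∩ CA ∩ REF, the set of all subsets of G which satisfy the identical ancestor point axiom, satisfy the convexity axiom, have the common ancestor property, and have the reflection property, is upward generic. -/
/-!
Along a directed family, common ancestors have non-increasing birthdates, and only finitely
many organisms are born before a given time, so the common ancestors stabilise; the eventual
one is a common ancestor of the union. Convexity and reflection pass to directed unions directly.

For IAP, let `v` in the union `U` have infinitely many descendants in `U`, let `N` be its
non-descendants in `U`, and fix a member `C₀` containing `v` and the common ancestor `c` of `U`.
REF and IAP in `C₀` make `N ∩ C₀` finite. A member of `N` with infinitely many descendants is,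
by REF and IAP, a generator of a larger member of the family, hence has a descendant in the
infinite set `C₀`, and so lies in `C₀` by convexity. By convexity of `U` every element of `N` is
reached from `c` by a path inside `N`, so `N` lies within the children of the finite set
`N ∩ C₀` and their finitely many descendants: `N` is finite.
-/

open Set Relation

theorem finite_of_reachable_from_finite {α : Type*} {r : α → α → Prop}
    (hr : ∀ a, {b | r a b}.Finite) {F S : Set α} (hF : F.Finite)
    (hreach : ∀ w ∈ S, w ∉ F → ∃ f ∈ F, TransGen (fun x y => r x y ∧ y ∈ S) f w)
    (hdesc : ∀ k ∈ S, k ∉ F → {u | TransGen r k u}.Finite) : S.Finite := by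
  set T := ⋃ f ∈ F, ⋃ k ∈ {k | r f k ∧ k ∈ S ∧ k ∉ F}, insert k {u | TransGen r k u}
  have hT : T.Finite := hF.biUnion fun f _ =>
    ((hr f).subset fun _ hk => hk.1).biUnion fun k hk => (hdesc k hk.2.1 hk.2.2).insert k
  refine (hF.union hT).subset fun w hwS => ?_
  by_cases hwF : w ∈ F
  · exact Or.inl hwF
  obtain ⟨f, hf, hpath⟩ := hreach w hwS hwF
  refine Or.inr ?_
  induction hpath using TransGen.head_induction_on with
  | single h => exact mem_biUnion hf (mem_biUnion ⟨h.1, h.2, hwF⟩ (mem_insert _ _))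
  | @head _ c h' h ih =>
    by_cases hc : c ∈ F
    · exact ih hc
    · exact mem_biUnion hf (mem_biUnion ⟨h'.1, h'.2, hc⟩
        (mem_insert_of_mem _ (TransGen.mono (fun _ _ e => e.1) _ _ h)))

namespace InfiniteBiosphere

variable {V : Type} {G : InfiniteBiosphere V}

theorem Ancestor.t_lt {v w : V} (h : G.Ancestor v w) : G.t v < G.t w := by
  induction h with
  | single e => exact G.edge_t _ _ e
  | tail _ e ih => exact ih.trans (G.edge_t _ _ e)

theorem Ancestor.not_ancestor {v w : V} (h : G.Ancestor v w) : ¬ G.Ancestor w v :=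
  fun h' => h.t_lt.not_gt h'.t_lt

theorem not_ancestor_self (v : V) : ¬ G.Ancestor v v :=
  fun h => h.t_lt.false

theorem Convex.setOf_not_ancestor {S : Set V} (hS : G.Convex S) (v : V) :
    G.Convex {w ∈ S | ¬ G.Ancestor v w} := by
  rintro x ⟨a, ⟨haS, -⟩, hax⟩ ⟨d, ⟨hdS, hvd⟩, hxd⟩
  exact ⟨hS x ⟨a, haS, hax⟩ ⟨d, hdS, hxd⟩, fun hvx => hvd (hvx.trans hxd)⟩

theorem Convex.transGen_of_ancestor {S : Set V} (hS : G.Convex S) {a w : V} (ha : a ∈ S)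
    (hw : w ∈ S) (h : G.Ancestor a w) : TransGen (fun x y => G.Edge x y ∧ y ∈ S) a w := by
  induction h with
  | single e => exact .single ⟨e, hw⟩
  | @tail b c hab e ih =>
    exact .tail (ih (hS b ⟨a, ha, hab⟩ ⟨c, hw, .single e⟩)) ⟨e, hw⟩

theorem isGenerator_of_infinite_descendants {S : Set V} (hI : G.IAP S)
    (hR : G.ReflectionProp S) {v : V} (hv : v ∈ S) (h : {w | G.Ancestor v w}.Infinite) :
    G.IsGenerator S v :=
  ⟨hv, (hI v hv).resolve_right (hR v hv h)⟩

theorem Convex.mem_of_isGenerator {S S' : Set V} (hS : G.Convex S) (hSinf : S.Infinite)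
    (hSS' : S ⊆ S') {a w : V} (hw : G.IsGenerator S' w) (ha : a ∈ S) (haw : G.Ancestor a w) :
    w ∈ S := by
  obtain ⟨u, huS, hu⟩ := (hSinf.sdiff hw.2).nonempty
  exact hS w ⟨a, ha, haw⟩ ⟨u, huS, not_not.1 fun h => hu ⟨hSS' huS, h⟩⟩

def IsCommonAncestor (G : InfiniteBiosphere V) (S : Set V) (v : V) : Prop :=
  v ∈ S ∧ ∀ w ∈ S, w ≠ v → G.Ancestor v w

theorem commonAncestorProp_iff {S : Set V} :
    G.CommonAncestorProp S ↔ ∃ v, G.IsCommonAncestor S v :=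
  Iff.rfl

theorem IsCommonAncestor.eq_of_t_le {S : Set V} {v w : V} (hv : G.IsCommonAncestor S v)
    (hw : w ∈ S) (h : G.t w ≤ G.t v) : w = v :=
  by_contra fun hne => (hv.2 w hw hne).t_lt.not_ge h

theorem IsCommonAncestor.t_le_of_subset {S S' : Set V} {v v' : V}
    (hv : G.IsCommonAncestor S v) (hv' : G.IsCommonAncestor S' v') (h : S ⊆ S') :
    G.t v' ≤ G.t v := by
  by_cases hne : v = v'
  · rw [hne]
  · exact (hv'.2 v (h hv.1) hne).t_lt.le

section DirectedUnion

variable {ι : Type*} {C : ι → Set V}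

theorem reflectionProp_iUnion (h : ∀ i, G.ReflectionProp (C i)) :
    G.ReflectionProp (⋃ i, C i) := by
  intro v hv hinf
  obtain ⟨i, hvi⟩ := mem_iUnion.1 hv
  exact (h i v hvi hinf).mono fun u hu => ⟨mem_iUnion_of_mem i hu.1, hu.2⟩

theorem convex_iUnion (hC : Directed (· ⊆ ·) C) (h : ∀ i, G.Convex (C i)) :
    G.Convex (⋃ i, C i) := by
  rintro v ⟨a, haU, hav⟩ ⟨d, hdU, hvd⟩
  obtain ⟨i, hai⟩ := mem_iUnion.1 haU
  obtain ⟨j, hdj⟩ := mem_iUnion.1 hdU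
  obtain ⟨k, hik, hjk⟩ := hC i j
  exact mem_iUnion_of_mem k (h k v ⟨a, hik hai, hav⟩ ⟨d, hjk hdj, hvd⟩)

theorem commonAncestorProp_iUnion [Nonempty ι] (hC : Directed (· ⊆ ·) C)
    (h : ∀ i, G.CommonAncestorProp (C i)) : G.CommonAncestorProp (⋃ i, C i) := by
  choose a ha using fun i => commonAncestorProp_iff.1 (h i)
  obtain ⟨i₀⟩ := ‹Nonempty ι›
  have hfin : (a '' {j | C i₀ ⊆ C j}).Finite :=
    (G.finite_early (G.t (a i₀) + 1)).subset <| by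
      rintro _ ⟨j, hj, rfl⟩
      exact ((ha i₀).t_le_of_subset (ha j) hj).trans_lt (lt_add_one _)
  obtain ⟨_, ⟨i₁, hi₀i₁, rfl⟩, hmin⟩ :=
    exists_min_image _ G.t hfin ⟨a i₀, i₀, (subset_rfl : C i₀ ⊆ C i₀), rfl⟩
  refine ⟨a i₁, mem_iUnion_of_mem i₁ (ha i₁).1, fun w hw hne => ?_⟩
  obtain ⟨i, hwi⟩ := mem_iUnion.1 hw
  obtain ⟨j, hij, hi₁j⟩ := hC i i₁
  have hstable : a i₁ = a j :=
    (ha j).eq_of_t_le (hi₁j (ha i₁).1) (hmin _ ⟨j, hi₀i₁.trans hi₁j, rfl⟩)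
  exact hstable ▸ (ha j).2 w (hij hwi) (hstable ▸ hne)

theorem iap_iUnion (hC : Directed (· ⊆ ·) C) (hI : ∀ i, G.IAP (C i))
    (hconv : ∀ i, G.Convex (C i)) (hR : ∀ i, G.ReflectionProp (C i))
    (hca : G.CommonAncestorProp (⋃ i, C i)) : G.IAP (⋃ i, C i) := by
  intro v hv
  rw [or_iff_not_imp_right]
  intro hdesc
  obtain ⟨c, hcU, hc⟩ := hca
  obtain ⟨i, hvi⟩ := mem_iUnion.1 hv
  obtain ⟨j, hcj⟩ := mem_iUnion.1 hcU
  obtain ⟨k₀, hik₀, hjk₀⟩ := hC i j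
  have hvdesc : {w | G.Ancestor v w}.Infinite := Set.Infinite.mono (fun _ h => h.2) hdesc
  have hvgen := isGenerator_of_infinite_descendants (hI k₀) (hR k₀) (hik₀ hvi) hvdesc
  have hC₀inf : (C k₀).Infinite := (hR k₀ v (hik₀ hvi) hvdesc).mono fun _ h => h.1
  have hvc : ¬ G.Ancestor v c := by
    by_cases hcv : v = c
    · exact hcv ▸ not_ancestor_self v
    · exact (hc v hv hcv).not_ancestor
  have hcF : c ∈ {w ∈ C k₀ | ¬ G.Ancestor v w} := ⟨hjk₀ hcj, hvc⟩
  have hNconv := (convex_iUnion hC hconv).setOf_not_ancestor v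
  refine finite_of_reachable_from_finite G.finite_children hvgen.2
    (fun w hw hwF => ⟨c, hcF, ?_⟩) (fun w hw hwF => ?_)
  · exact hNconv.transGen_of_ancestor ⟨hcU, hvc⟩ hw (hc w hw.1 fun h => hwF (h ▸ hcF))
  · by_contra hinf
    obtain ⟨l, hwl⟩ := mem_iUnion.1 hw.1
    obtain ⟨k, hlk, hk₀k⟩ := hC l k₀
    have hwgen := isGenerator_of_infinite_descendants (hI k) (hR k) (hlk hwl) hinf
    have hcw := hc w hw.1 fun h => hwF (h ▸ hcF)
    exact hwF ⟨(hconv k₀).mem_of_isGenerator hC₀inf hk₀k hwgen (hjk₀ hcj) hcw, hw.2⟩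

end DirectedUnion

end InfiniteBiosphere

/-- `IAP ∩ CONV ∩ CA ∩ REF` is upward generic. -/
theorem iap_conv_ca_ref_upwardGeneric {V : Type} (G : InfiniteBiosphere V) :
    UpwardGeneric {S : Set V |
      G.IAP S ∧ G.Convex S ∧ G.CommonAncestorProp S ∧ G.ReflectionProp S} := by
  intro X _ _ C hmono _ hT
  have hC : Directed (· ⊆ ·) C :=
    (monotone_iff_forall_lt.2 fun a b h => hmono a b h).directed_le
  have hca := G.commonAncestorProp_iUnion hC fun a => (hT a).2.2.1
  exact ⟨G.iap_iUnion hC (fun a => (hT a).1) (fun a => (hT a).2.1) (fun a => (hT a).2.2.2) hca,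
    G.convex_iUnion hC (fun a => (hT a).2.1), hca, G.reflectionProp_iUnion fun a => (hT a).2.2.2⟩
end

section
/- Let G be an infinite biosphere. Then CONV ∩ REF, the set of all subsets of G which satisfy the convexity axiom and have the reflection property, is downward generic. -/
/-- In a decreasing chain of nonempty finite sets indexed by a nonempty
linear order, the intersection is nonempty. -/
lemma chain_finite_inter {V X : Type} [LinearOrder X] [Nonempty X]
    (F : X → Set V) (hdec : ∀ a b : X, a < b → F b ⊆ F a)
    (hfin : ∀ a, (F a).Finite) (hne : ∀ a, (F a).Nonempty) :
    ∃ c, ∀ a, c ∈ F a := by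
  have hne' : {n | ∃ a, (F a).ncard = n}.Nonempty :=
    ⟨(F (Classical.arbitrary X)).ncard, Classical.arbitrary X, rfl⟩
  obtain ⟨a0, ha0⟩ := Nat.sInf_mem hne'
  obtain ⟨c, hc⟩ := hne a0
  refine ⟨c, fun b => ?_⟩
  rcases lt_trichotomy b a0 with h | h | h
  · exact hdec b a0 h hc
  · exact h ▸ hc
  · have hsub := hdec a0 b h
    have hle : (F a0).ncard ≤ (F b).ncard := by
      rw [ha0]; exact Nat.sInf_le ⟨b, rfl⟩
    have heq : F b = F a0 :=
      Set.eq_of_subset_of_ncard_le hsub hle (hfin a0)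
    rw [heq]; exact hc

/-- `CONV ∩ REF` is downward generic. -/
theorem conv_ref_downwardGeneric {V : Type} (G : InfiniteBiosphere V) :
    DownwardGeneric {S : Set V | G.Convex S ∧ G.ReflectionProp S} := by
  intro X _ _ C hdec hne hmem
  constructor
  · -- convexity of the intersection
    intro v ha hd
    obtain ⟨a, haI, haanc⟩ := ha
    obtain ⟨d, hdI, hdanc⟩ := hd
    exact Set.mem_iInter.2 fun x =>
      (hmem x).1 v ⟨a, Set.mem_iInter.1 haI x, haanc⟩
        ⟨d, Set.mem_iInter.1 hdI x, hdanc⟩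
  · -- reflection property of the intersection
    intro v hv hinf
    set P : V → Prop :=
      fun u => u ∈ ⋂ a : X, C a ∧ ∀ a : X, {w ∈ C a | G.Ancestor u w}.Infinite
      with hP
    have hPv : P v := by
      refine ⟨hv, fun a => ?_⟩
      exact (hmem a).2 v (Set.mem_iInter.1 hv a) hinf
    have hstep : ∀ u, P u → ∃ c, G.Edge u c ∧ P c := by
      intro u hu
      -- candidate children, good for stage `a`
      set F : X → Set V :=
        fun a => {c | G.Edge u c ∧ {w ∈ C a | w = c ∨ G.Ancestor c w}.Infinite}
        with hF
      have hFsub : ∀ a, F a ⊆ {w | G.Edge u w} := fun a c hc => hc.1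
      have hFfin : ∀ a, (F a).Finite :=
        fun a => (G.finite_children u).subset (hFsub a)
      have hFdec : ∀ a b : X, a < b → F b ⊆ F a := by
        intro a b hab c hc
        refine ⟨hc.1, hc.2.mono ?_⟩
        intro w hw
        exact ⟨hdec a b hab hw.1, hw.2⟩
      have hFne : ∀ a, (F a).Nonempty := by
        intro a
        by_contra hcon
        rw [Set.not_nonempty_iff_eq_empty] at hcon
        have hsub : {w ∈ C a | G.Ancestor u w} ⊆
            ⋃ c ∈ {w | G.Edge u w}, {w ∈ C a | w = c ∨ G.Ancestor c w} := by
          intro w hw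
          obtain ⟨hwC, hanc⟩ := hw
          obtain ⟨c, hc1, hc2⟩ : ∃ c, G.Edge u c ∧
              Relation.ReflTransGen G.Edge c w := by
            exact Relation.TransGen.head'_iff.1 hanc
          refine Set.mem_biUnion hc1 ⟨hwC, ?_⟩
          rcases (Relation.reflTransGen_iff_eq_or_transGen.1 hc2) with h | h
          · exact Or.inl h
          · exact Or.inr h
        have hfinu : ({w ∈ C a | G.Ancestor u w} : Set V).Finite := by
          refine Set.Finite.subset (Set.Finite.biUnion (G.finite_children u) ?_) hsub
          intro c hc
          by_contra hcinf
          have : c ∈ F a := ⟨hc, hcinf⟩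
          simp [hcon] at this
        exact hu.2 a hfinu
      obtain ⟨c, hcF⟩ := chain_finite_inter F hFdec hFfin hFne
      have hedge : G.Edge u c := (hcF (Classical.arbitrary X)).1
      -- for each a, infinitely many descendants of c in C a
      have hdescInf : ∀ a : X, {w ∈ C a | G.Ancestor c w}.Infinite := by
        intro a
        have h1 : ({w ∈ C a | w = c ∨ G.Ancestor c w} \ {c} : Set V).Infinite :=
          ((hcF a).2).diff (Set.finite_singleton c)
        refine h1.mono ?_
        rintro w ⟨⟨hwC, hor⟩, hwc⟩
        rcases hor with rfl | h
        · exact absurd rfl hwc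
        · exact ⟨hwC, h⟩
      have hcI : c ∈ ⋂ a : X, C a := by
        refine Set.mem_iInter.2 fun a => ?_
        obtain ⟨w, hwC, hwanc⟩ := (hdescInf a).nonempty
        exact (hmem a).1 c ⟨u, Set.mem_iInter.1 hu.1 a, Relation.TransGen.single hedge⟩
          ⟨w, hwC, hwanc⟩
      exact ⟨c, hedge, hcI, hdescInf⟩
    -- build an infinite path inside the intersection
    choose! g hg1 hg2 using hstep
    let f : ℕ → {u : V // P u} :=
      fun n => Nat.rec ⟨v, hPv⟩ (fun _ p => ⟨g p.1, hg2 p.1 p.2⟩) n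
    have hfedge : ∀ n, G.Edge (f n).1 (f (n + 1)).1 :=
      fun n => hg1 (f n).1 (f n).2
    have hanc : ∀ n, G.Ancestor v (f (n + 1)).1 := by
      intro n
      induction n with
      | zero => exact Relation.TransGen.single (hfedge 0)
      | succ k ih => exact ih.tail (hfedge (k + 1))
    have hmono : StrictMono (fun n => G.t (f n).1) :=
      strictMono_nat_of_lt_succ fun n => G.edge_t _ _ (hfedge n)
    have hinj : Function.Injective (fun n : ℕ => (f (n + 1)).1) := by
      intro m n h
      simp only at h
      have h2 : G.t (f (m + 1)).1 = G.t (f (n + 1)).1 := congrArg G.t h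
      have h3 : m + 1 = n + 1 := hmono.injective (a₁ := m + 1) (a₂ := n + 1) h2
      omega
    exact Set.infinite_of_injective_forall_mem hinj
      (fun n => ⟨(f (n + 1)).2.1, hanc n⟩)
end

section
/- There exists an infinite biosphere G such that IAP ∩ CONV ∩ CA, the set of all subsets of G which satisfy the identical ancestor point axiom, satisfy the convexity axiom, and have the common ancestor property, is NOT upward generic. (Witness: G consists of two infinite directed paths v_1, v_2, ... and w_1, w_2, ... with v_1 = w_1 and no other shared vertices or edges; the ascending chain S_α = {v_1, v_2, ...} ∪ {w_1, ..., w_α} for α ∈ ℕ has each S_α in IAP ∩ CONV ∩ CA, but the union fails the identical ancestor point axiom.) -/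
namespace TwoPaths

abbrev V := ℕ ⊕ ℕ

def E : V → V → Prop
  | .inl a, .inl b => b = a + 1
  | .inl a, .inr b => a = 0 ∧ b = 0
  | .inr a, .inr b => b = a + 1
  | .inr _, .inl _ => False

def R : V → V → Prop
  | .inl a, .inl b => a < b
  | .inl a, .inr _ => a = 0
  | .inr a, .inr b => a < b
  | .inr _, .inl _ => False

lemma R_tail {v b c : V} (h : R v b) (e : E b c) : R v c := by
  cases v <;> cases b <;> cases c <;> simp_all [R, E] <;> omega

lemma E_R {v w : V} (e : E v w) : R v w := by
  cases v <;> cases w <;> simp_all [R, E] <;> omega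

lemma anc_R {v w : V} (h : Relation.TransGen E v w) : R v w := by
  induction h with
  | single e => exact E_R e
  | tail _ e ih => exact R_tail ih e

lemma anc_R' {v w : V} (h : Relation.TransGen E v w) : R v w := anc_R h

lemma anc_inl_inl {a b : ℕ} (h : a < b) : Relation.TransGen E (.inl a) (.inl b : V) := by
  induction b with
  | zero => omega
  | succ n ih =>
    rcases Nat.lt_succ_iff_lt_or_eq.mp h with h' | h'
    · exact (ih h').tail (by simp [E])
    · subst h'; exact .single (by simp [E])

lemma anc_inr_inr {a b : ℕ} (h : a < b) : Relation.TransGen E (.inr a) (.inr b : V) := by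
  induction b with
  | zero => omega
  | succ n ih =>
    rcases Nat.lt_succ_iff_lt_or_eq.mp h with h' | h'
    · exact (ih h').tail (by simp [E])
    · subst h'; exact .single (by simp [E])

lemma anc_inl0_inr (b : ℕ) : Relation.TransGen E (.inl 0) (.inr b : V) := by
  induction b with
  | zero => exact .single (by simp [E])
  | succ n ih => exact ih.tail (by simp [E])

noncomputable def G : InfiniteBiosphere V where
  Edge := E
  t v := match v with | .inl a => a | .inr b => b + 1
  edge_t v w h := by cases v <;> cases w <;> simp_all [E] <;> push_cast <;> omega
  finite_early r := by
    have h : {v : V | (match v with | .inl a => (a:ℝ) | .inr b => (b:ℝ) + 1) < r} ⊆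
        (Sum.inl '' Set.Iio ⌈r⌉₊) ∪ (Sum.inr '' Set.Iio ⌈r⌉₊) := by
      rintro (a | b) hv
      · exact Or.inl ⟨a, Nat.lt_ceil.mpr hv, rfl⟩
      · exact Or.inr ⟨b, Nat.lt_ceil.mpr (by simp at hv ⊢; linarith), rfl⟩
    exact Set.Finite.subset (((Set.finite_Iio _).image _).union ((Set.finite_Iio _).image _)) h
  finite_children v := by
    have h : {w : V | E v w} ⊆ (match v with
        | .inl a => {Sum.inl (a+1), Sum.inr 0}
        | .inr a => {Sum.inr (a+1)} : Set V) := by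
      cases v <;> rintro (b | b) hw <;> simp_all [E]
    cases v <;> exact Set.Finite.subset (Set.toFinite _) h
  infinite_verts := inferInstance

def C (k : ℕ) : Set V := {v | match v with | .inl _ => True | .inr b => b < k}

lemma anc_iff {v w : V} : G.Ancestor v w ↔ R v w := by
  constructor
  · exact anc_R
  · intro h
    cases v <;> cases w <;> simp_all [R]
    · exact anc_inl_inl h
    · subst h; exact anc_inl0_inr _
    · exact anc_inr_inr h

lemma C_mem (k : ℕ) :
    G.IAP (C k) ∧ G.Convex (C k) ∧ G.CommonAncestorProp (C k) := by
  refine ⟨?_, ?_, ?_⟩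
  · rintro (a | a) hv
    · -- left: non-descendants finite
      left
      have h : {w ∈ C k | ¬ G.Ancestor (.inl a) w} ⊆
          (Sum.inl '' Set.Iic a) ∪ (Sum.inr '' Set.Iio k) := by
        rintro (b | b) ⟨hw, hnA⟩
        · refine Or.inl ⟨b, ?_, rfl⟩
          simp only [Set.mem_Iic]
          by_contra hb
          exact hnA (anc_iff.mpr (by simp [R]; omega))
        · exact Or.inr ⟨b, hw, rfl⟩
      exact Set.Finite.subset (((Set.finite_Iic _).image _).union ((Set.finite_Iio _).image _)) h
    · right
      have h : {w ∈ C k | G.Ancestor (.inr a) w} ⊆ Sum.inr '' Set.Iio k := by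
        rintro (b | b) ⟨hw, hA⟩
        · exact absurd (anc_iff.mp hA) (by simp [R])
        · exact ⟨b, hw, rfl⟩
      exact Set.Finite.subset ((Set.finite_Iio _).image _) h
  · rintro (a | a) _ ⟨d, hd, hA⟩
    · trivial
    · obtain (b | b) := d
      · exact absurd (anc_iff.mp hA) (by simp [R])
      · have : a < b := anc_iff.mp hA
        exact lt_trans this hd
  · refine ⟨.inl 0, trivial, ?_⟩
    rintro (b | b) hw hne
    · exact anc_iff.mpr (by simp only [R]; exact Nat.pos_of_ne_zero (by simpa using hne))
    · exact anc_iff.mpr (by simp [R])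

end TwoPaths

/-- There is an infinite biosphere in which `IAP ∩ CONV ∩ CA` is not upward generic. -/
theorem exists_iap_conv_ca_not_upwardGeneric :
    ∃ (V : Type) (G : InfiniteBiosphere V),
      ¬ UpwardGeneric {S : Set V |
        G.IAP S ∧ G.Convex S ∧ G.CommonAncestorProp S} := by
  refine ⟨TwoPaths.V, TwoPaths.G, ?_⟩
  intro h
  have hU := h ℕ TwoPaths.C
    (fun a b hab v hv => by
      obtain (x | x) := v
      · trivial
      · exact lt_trans hv hab)
    (fun a => ⟨.inl 0, trivial⟩)
    (fun a => TwoPaths.C_mem a)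
  obtain ⟨hIAP, -, -⟩ := hU
  have hmem : (Sum.inr 0 : TwoPaths.V) ∈ ⋃ a : ℕ, TwoPaths.C a :=
    Set.mem_iUnion.mpr ⟨1, by simp [TwoPaths.C]⟩
  rcases hIAP (.inr 0) hmem with hfin | hfin
  · refine Set.infinite_of_injective_forall_mem
      (f := fun n : ℕ => (Sum.inl n : TwoPaths.V)) (fun a b hab => by simpa using hab) ?_ hfin
    intro n
    refine ⟨Set.mem_iUnion.mpr ⟨0, trivial⟩, ?_⟩
    intro hA
    exact absurd (TwoPaths.anc_iff.mp hA) (by simp [TwoPaths.R])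
  · refine Set.infinite_of_injective_forall_mem
      (f := fun n : ℕ => (Sum.inr (n+1) : TwoPaths.V)) (fun a b hab => by simpa using hab) ?_ hfin
    intro n
    refine ⟨Set.mem_iUnion.mpr ⟨n+2, by simp [TwoPaths.C]⟩, ?_⟩
    exact TwoPaths.anc_iff.mpr (by simp [TwoPaths.R])
end

section
/- There exists an infinite biosphere G such that IAP ∩ CONV ∩ REF, the set of all subsets of G which satisfy the identical ancestor point axiom, satisfy the convexity axiom, and have the reflection property, is NOT upward generic. (Witness: G consists of an infinite directed path v_1, v_2, ... together with additional distinct vertices w_1, w_2, ..., where each w_i is parentless and has v_i as its lone child; the ascending chain S_α = {v_1, v_2, ...} ∪ {w_1, ..., w_α} for α ∈ ℕ has each S_α in IAP ∩ CONV ∩ REF, but the union fails the identical ancestor point axiom.) -/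
namespace BioWitness

abbrev VV := ℕ ⊕ ℕ

def E : VV → VV → Prop
  | .inl m, .inl n => n = m + 1
  | .inr m, .inl n => n = m
  | _, .inr _ => False

def idx : VV → ℕ
  | .inl n => 2 * n + 1
  | .inr n => 2 * n

def rk : VV → ℕ
  | .inl n => n + 1
  | .inr n => n

lemma idx_inj : Function.Injective idx := by
  intro v w h
  cases v <;> cases w <;> simp [idx] at h ⊢ <;> omega

lemma E_idx {v w : VV} (h : E v w) : idx v < idx w := by
  cases v <;> cases w <;> simp [E, idx] at h ⊢ <;> omega

lemma E_inl {v w : VV} (h : E v w) : ∃ n, w = .inl n := by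
  cases w with
  | inl n => exact ⟨n, rfl⟩
  | inr n => cases v <;> exact absurd h (by simp [E])

lemma no_anc_inr {v : VV} {n : ℕ} (h : Relation.TransGen E v (.inr n)) : False := by
  cases h with
  | single h => obtain ⟨m, hm⟩ := E_inl h; simp at hm
  | tail _ h => obtain ⟨m, hm⟩ := E_inl h; simp at hm

lemma E_rk {v w : VV} (h : E v w) : rk v < rk w := by
  cases v <;> cases w <;> simp [E, rk] at h ⊢ <;> omega

lemma anc_rk {v w : VV} (h : Relation.TransGen E v w) : rk v < rk w := by
  induction h with
  | single h => exact E_rk h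
  | tail _ h ih => exact ih.trans (E_rk h)

lemma anc_inl_inl {m n : ℕ} (h : m < n) : Relation.TransGen E (.inl m) (.inl n) := by
  induction n with
  | zero => omega
  | succ k ih =>
      rcases Nat.lt_succ_iff_lt_or_eq.mp h with h' | rfl
      · exact (ih h').tail (by simp [E])
      · exact Relation.TransGen.single (by simp [E])

lemma anc_of_rk_le {v : VV} {n : ℕ} (h : rk v ≤ n) : Relation.TransGen E v (.inl n) := by
  cases v with
  | inl m => exact anc_inl_inl (by simpa [rk] using h)
  | inr j =>
      simp only [rk] at h
      rcases eq_or_lt_of_le h with rfl | h'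
      · exact Relation.TransGen.single (by simp [E])
      · exact Relation.TransGen.head (by simp [E]) (anc_inl_inl h')

def G : InfiniteBiosphere VV where
  Edge := E
  t := fun v => (idx v : ℝ)
  edge_t := fun v w h => Nat.cast_lt.mpr (E_idx h)
  finite_early := fun r => by
    have : {v : VV | (idx v : ℝ) < r} = idx ⁻¹' {n : ℕ | (n : ℝ) < r} := rfl
    rw [this]
    apply Set.Finite.preimage idx_inj.injOn
    have : {n : ℕ | (n : ℝ) < r} ⊆ Set.Iio ⌈r⌉₊ := fun n hn => Nat.lt_ceil.mpr hn
    exact (Set.finite_Iio _).subset this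
  finite_children := fun v => by
    cases v with
    | inl m =>
        apply (Set.finite_singleton (Sum.inl (m+1) : VV)).subset
        intro w hw
        cases w <;> simp_all [E]
    | inr m =>
        apply (Set.finite_singleton (Sum.inl m : VV)).subset
        intro w hw
        cases w <;> simp_all [E]
  infinite_verts := inferInstance

lemma anc_iff {v w : VV} : G.Ancestor v w ↔ Relation.TransGen E v w := Iff.rfl

def C : ℕ → Set VV := fun k => {v | match v with | .inl _ => True | .inr i => i ≤ k}

lemma inl_mem_C (k n : ℕ) : (Sum.inl n : VV) ∈ C k := by trivial

lemma inr_mem_C_iff {k i : ℕ} : (Sum.inr i : VV) ∈ C k ↔ i ≤ k := Iff.rfl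

lemma C_mono {a b : ℕ} (h : a < b) : C a ⊆ C b := by
  intro v hv
  cases v with
  | inl n => trivial
  | inr i => exact le_trans (inr_mem_C_iff.mp hv) h.le

lemma C_iap (k : ℕ) : G.IAP (C k) := by
  intro v hv
  left
  have hsub : {w ∈ C k | ¬ G.Ancestor v w} ⊆
      (Sum.inl '' Set.Iio (rk v)) ∪ (Sum.inr '' Set.Iic k) := by
    rintro w ⟨hw, hna⟩
    cases w with
    | inl n =>
        left
        have hlt : n < rk v := by
          by_contra hc
          exact hna (anc_of_rk_le (not_lt.mp hc))
        exact ⟨n, hlt, rfl⟩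
    | inr i => exact Or.inr ⟨i, inr_mem_C_iff.mp hw, rfl⟩
  exact (((Set.finite_Iio _).image _).union ((Set.finite_Iic _).image _)).subset hsub

lemma C_convex (k : ℕ) : G.Convex (C k) := by
  rintro v ⟨a, _, ha⟩ _
  cases v with
  | inl n => trivial
  | inr i => exact absurd ha no_anc_inr

lemma C_refl (k : ℕ) : G.ReflectionProp (C k) := by
  intro v _ _
  have hsub : Sum.inl '' Set.Ici (rk v) ⊆ {w ∈ C k | G.Ancestor v w} := by
    rintro w ⟨n, hn, rfl⟩
    exact ⟨inl_mem_C k n, anc_of_rk_le hn⟩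
  exact Set.Infinite.mono hsub ((Set.Ici_infinite _).image (Sum.inl_injective.injOn))

end BioWitness

/-- There is an infinite biosphere in which `IAP ∩ CONV ∩ REF` is not upward generic. -/
theorem exists_iap_conv_ref_not_upwardGeneric :
    ∃ (V : Type) (G : InfiniteBiosphere V),
      ¬ UpwardGeneric {S : Set V |
        G.IAP S ∧ G.Convex S ∧ G.ReflectionProp S} := by
  classical
  refine ⟨BioWitness.VV, BioWitness.G, ?_⟩
  intro h
  have hU := h ℕ BioWitness.C (fun a b hab => BioWitness.C_mono hab)
    (fun a => ⟨Sum.inl 0, BioWitness.inl_mem_C a 0⟩)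
    (fun a => ⟨BioWitness.C_iap a, BioWitness.C_convex a, BioWitness.C_refl a⟩)
  obtain ⟨hIAP, -, -⟩ := hU
  have h0 : (Sum.inl 0 : BioWitness.VV) ∈ ⋃ a : ℕ, BioWitness.C a :=
    Set.mem_iUnion.mpr ⟨0, BioWitness.inl_mem_C 0 0⟩
  rcases hIAP _ h0 with hfin | hfin
  · have hsub : Sum.inr '' (Set.univ : Set ℕ) ⊆
        {w ∈ ⋃ a : ℕ, BioWitness.C a | ¬ BioWitness.G.Ancestor (Sum.inl 0) w} := by
      rintro w ⟨i, -, rfl⟩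
      exact ⟨Set.mem_iUnion.mpr ⟨i, le_refl i⟩, fun hc => BioWitness.no_anc_inr hc⟩
    exact (Set.infinite_univ.image Sum.inr_injective.injOn).mono hsub hfin
  · have hsub : Sum.inl '' Set.Ici 1 ⊆
        {w ∈ ⋃ a : ℕ, BioWitness.C a | BioWitness.G.Ancestor (Sum.inl 0) w} := by
      rintro w ⟨n, hn, rfl⟩
      exact ⟨Set.mem_iUnion.mpr ⟨0, BioWitness.inl_mem_C 0 n⟩,
        BioWitness.anc_of_rk_le (by simpa [BioWitness.rk] using hn)⟩
    exact ((Set.Ici_infinite _).image Sum.inl_injective.injOn).mono hsub hfin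
end

section
/- There exists an infinite biosphere G such that the set REF of all subsets of G having the reflection property is NOT downward generic. (Witness: G consists of a single infinite directed path v_1, v_2, ...; the descending chain S_α = {v_1} ∪ {v_i : i > α} for α ∈ ℕ has each S_α in REF, but the intersection ∩_α S_α = {v_1} is not in REF.) -/
/-- The single infinite path biosphere on ℕ. -/
def pathBiosphere : InfiniteBiosphere ℕ where
  Edge v w := w = v + 1
  t v := (v : ℝ)
  edge_t v w h := by rw [h]; simp
  finite_early r := by
    apply Set.Finite.subset (Set.finite_Iio ⌈r⌉₊.succ)
    intro v hv
    simp only [Set.mem_setOf_eq] at hv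
    simp only [Set.mem_Iio, Nat.lt_succ_iff]
    calc v ≤ ⌈(v:ℝ)⌉₊ := by simp
    _ ≤ ⌈r⌉₊ := Nat.ceil_le_ceil (le_of_lt hv)
  finite_children v := Set.Finite.subset (Set.finite_singleton (v + 1)) (fun w hw => hw)
  infinite_verts := inferInstance

lemma path_ancestor_iff (v w : ℕ) : pathBiosphere.Ancestor v w ↔ v < w := by
  constructor
  · intro h
    induction h with
    | single h => simp only [pathBiosphere] at h; omega
    | tail _ h ih => simp only [pathBiosphere] at h; omega
  · intro h
    induction w with
    | zero => omega
    | succ n ih =>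
      rcases Nat.lt_or_ge v n with hv | hv
      · exact (ih hv).tail rfl
      · have : v = n := by omega
        subst this
        exact Relation.TransGen.single rfl

/-- There is an infinite biosphere in which `REF` is not downward generic. -/
theorem exists_ref_not_downwardGeneric :
    ∃ (V : Type) (G : InfiniteBiosphere V),
      ¬ DownwardGeneric {S : Set V | G.ReflectionProp S} := by
  refine ⟨ℕ, pathBiosphere, ?_⟩
  intro h
  have key := h ℕ (fun n => {0} ∪ {i | n < i})
    (fun a b hab x hx => by
      rcases hx with hx | hx
      · exact Or.inl hx
      · exact Or.inr (lt_of_le_of_lt (Nat.le_of_lt hab) hx))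
    (fun a => ⟨a + 1, Or.inr (Nat.lt_succ_self a)⟩)
    (fun a => by
      intro v hv _
      have hanc : {w : ℕ | pathBiosphere.Ancestor v w ∧ a < w}.Infinite := by
        have : {w : ℕ | a + v < w} ⊆ {w : ℕ | pathBiosphere.Ancestor v w ∧ a < w} := by
          intro w hw
          simp only [Set.mem_setOf_eq] at hw ⊢
          rw [path_ancestor_iff]
          omega
        exact ((Set.Ioi_infinite (a + v)).mono this)
      apply hanc.mono
      intro w hw
      exact ⟨Or.inr hw.2, hw.1⟩)
  have h0 : (⋂ a : ℕ, ({0} ∪ {i | a < i} : Set ℕ)) = {0} := by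
    ext x
    simp only [Set.mem_iInter, Set.mem_union, Set.mem_singleton_iff, Set.mem_setOf_eq]
    constructor
    · intro hx
      rcases hx x with hx | hx
      · exact hx
      · omega
    · intro hx a; exact Or.inl hx
  rw [h0] at key
  have h1 : {w : ℕ | w ∈ ({0} : Set ℕ) ∧ pathBiosphere.Ancestor 0 w}.Finite := by
    apply Set.Finite.subset (Set.finite_singleton 0)
    intro w hw; exact hw.1
  have h2 : {w : ℕ | pathBiosphere.Ancestor 0 w}.Infinite := by
    have : {w : ℕ | 0 < w} ⊆ {w : ℕ | pathBiosphere.Ancestor 0 w} := by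
      intro w hw; rw [Set.mem_setOf_eq, path_ancestor_iff]; exact hw
    exact (Set.Ioi_infinite 0).mono this
  exact (key 0 rfl h2) h1
end

section
/- (Existence of maximal specieslike clusters with the common ancestor and reflection properties) Let G be an infinite biosphere. For every vertex v of G, there is an IAP ∩ CONV ∩ CA ∩ REF-maximal set containing v. -/
/-- An `IAP ∩ CONV ∩ CA ∩ REF`-maximal set: a nonempty set satisfying the
identical ancestor point axiom, the convexity axiom, the common ancestor
property, and the reflection property, no proper superset of which satisfies
all four conditions. -/
def IAPConvCaRefMaximal {V : Type} (G : InfiniteBiosphere V) (S : Set V) : Prop :=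
  S.Nonempty ∧
    G.IAP S ∧ G.Convex S ∧ G.CommonAncestorProp S ∧ G.ReflectionProp S ∧
    ∀ S' : Set V, S ⊂ S' →
      ¬ (G.IAP S' ∧ G.Convex S' ∧ G.CommonAncestorProp S' ∧ G.ReflectionProp S')

/-!
If `v` has finitely many descendants, `v` together with them already has the four properties.
Otherwise take, by Zorn's lemma, a minimal convex set rooted at `v` in which every member has
infinitely many descendants; intersections of chains of such sets keep this by König's lemma,
since every vertex has finitely many children. Minimality leaves each member only finitely
many non-descendants, which gives the four properties. Finally these properties pass to unions
of chains, so Zorn's lemma extends this set to a maximal one.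
-/

namespace InfiniteBiosphere

variable {V : Type} {G : InfiniteBiosphere V} {S : Set V} {a b c p v z : V}

def descendants (G : InfiniteBiosphere V) (v : V) : Set V :=
  {w | G.Ancestor v w}

theorem Ancestor.t_lt_s19 (h : G.Ancestor a b) : G.t a < G.t b := by
  induction h with
  | single h => exact G.edge_t _ _ h
  | tail _ h ih => exact ih.trans (G.edge_t _ _ h)

theorem Ancestor.trans (hab : G.Ancestor a b) (hbc : G.Ancestor b c) : G.Ancestor a c :=
  Relation.TransGen.trans hab hbc

theorem ancestor_irrefl (a : V) : ¬ G.Ancestor a a :=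
  fun h => lt_irrefl _ h.t_lt_s19

theorem exists_min_birthdate {A : Set V} (hA : A.Nonempty) :
    ∃ a ∈ A, ∀ b ∈ A, G.t a ≤ G.t b := by
  obtain ⟨a₀, ha₀⟩ := hA
  obtain ⟨a, ⟨ha, -⟩, hmin⟩ := Set.exists_min_image (A ∩ {x | G.t x < G.t a₀ + 1}) G.t
    ((G.finite_early _).subset Set.inter_subset_right) ⟨a₀, ha₀, by simp⟩
  refine ⟨a, ha, fun b hb => ?_⟩
  by_cases hb' : G.t b < G.t a₀ + 1
  · exact hmin b ⟨hb, hb'⟩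
  · linarith [hmin a₀ ⟨ha₀, by simp⟩]

/-- Pigeonhole over the finitely many children of `p`. -/
theorem exists_edge_infinite_descendants_inter {W : Set V}
    (h : (G.descendants p ∩ W).Infinite) :
    ∃ q, G.Edge p q ∧ (G.descendants q ∩ W).Infinite := by
  by_contra! hfin
  refine h (((G.finite_children p).biUnion fun q hq =>
    ((hfin q hq).insert q)).subset ?_)
  rintro x ⟨hx, hxW⟩
  obtain ⟨q, hq, hqx⟩ := Relation.TransGen.head'_iff.mp hx
  refine Set.mem_biUnion hq ?_
  rcases Relation.reflTransGen_iff_eq_or_transGen.mp hqx with rfl | hqx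
  · exact Set.mem_insert _ _
  · exact Set.mem_insert_of_mem _ ⟨hqx, hxW⟩

/-- König's lemma for a chain of sets: the children of `p` that work for a given `W` form a
chain of nonempty subsets of a finite set, so one child works for all of them. -/
theorem exists_edge_forall_infinite_descendants_inter {𝒲 : Set (Set V)}
    (hchain : IsChain (· ⊆ ·) 𝒲) (hne : 𝒲.Nonempty)
    (h : ∀ W ∈ 𝒲, (G.descendants p ∩ W).Infinite) :
    ∃ q, G.Edge p q ∧ ∀ W ∈ 𝒲, (G.descendants q ∩ W).Infinite := by
  let good (W : Set V) : Set V := {q | G.Edge p q ∧ (G.descendants q ∩ W).Infinite}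
  have hfin : (good '' 𝒲).Finite :=
    (G.finite_children p).finite_subsets.subset (by rintro _ ⟨W, -, rfl⟩ q hq; exact hq.1)
  obtain ⟨_, ⟨⟨W₀, hW₀, rfl⟩, hmin⟩⟩ := hfin.exists_minimal (hne.image good)
  obtain ⟨q, hq, hqW₀⟩ := exists_edge_infinite_descendants_inter (h W₀ hW₀)
  refine ⟨q, hq, fun W hW => ?_⟩
  rcases hchain.total hW₀ hW with hle | hle
  · exact hqW₀.mono (Set.inter_subset_inter_right _ hle)
  · have hmono : good W ⊆ good W₀ := fun r hr =>
      ⟨hr.1, hr.2.mono (Set.inter_subset_inter_right _ hle)⟩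
    exact (hmin ⟨W, hW, rfl⟩ hmono ⟨hq, hqW₀⟩).2

/-- A finite set of such vertices would have a last-born member, which still has a `P`-child. -/
theorem infinite_setOf_ancestor_of_forall_exists_edge {P : V → Prop}
    (hP : ∀ x, P x → ∃ y, G.Edge x y ∧ P y) (hz : P z) :
    {y | G.Ancestor z y ∧ P y}.Infinite := by
  intro hfin
  obtain ⟨q, hzq, hq⟩ := hP z hz
  obtain ⟨y, ⟨hzy, hy⟩, hmax⟩ :=
    Set.exists_max_image _ G.t hfin ⟨q, Relation.TransGen.single hzq, hq⟩
  obtain ⟨r, hyr, hr⟩ := hP y hy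
  exact (hmax r ⟨hzy.tail hyr, hr⟩).not_gt (G.edge_t _ _ hyr)

theorem infinite_setOf_infinite_descendants_inter {W : Set V}
    (h : (G.descendants z ∩ W).Infinite) :
    {q | G.Ancestor z q ∧ (G.descendants q ∩ W).Infinite}.Infinite :=
  infinite_setOf_ancestor_of_forall_exists_edge
    (fun _ => exists_edge_infinite_descendants_inter) h

/-- The paper's `IAP ∩ CONV ∩ CA ∩ REF`. -/
structure IsCluster (G : InfiniteBiosphere V) (S : Set V) : Prop where
  iap : G.IAP S
  convex : G.Convex S
  commonAncestor : G.CommonAncestorProp S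
  reflection : G.ReflectionProp S

structure IsViableFrom (G : InfiniteBiosphere V) (v : V) (W : Set V) : Prop where
  root_mem : v ∈ W
  ancestor_of_mem : ∀ w ∈ W, w ≠ v → G.Ancestor v w
  convex : G.Convex W
  infinite_descendants_inter : ∀ z ∈ W, (G.descendants z ∩ W).Infinite

theorem convex_insert_descendants (v : V) : G.Convex (insert v (G.descendants v)) := by
  rintro x ⟨a, ha, hax⟩ -
  exact Or.inr (ha.elim (fun h => h ▸ hax) fun h => h.trans hax)

def viablePart (G : InfiniteBiosphere V) (X : Set V) : Set V :=
  {z ∈ X | (G.descendants z ∩ X).Infinite}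

theorem isViableFrom_viablePart {X : Set V} (hv : v ∈ X)
    (hroot : ∀ w ∈ X, w ≠ v → G.Ancestor v w) (hX : G.Convex X)
    (hinf : (G.descendants v ∩ X).Infinite) :
    G.IsViableFrom v (G.viablePart X) where
  root_mem := ⟨hv, hinf⟩
  ancestor_of_mem w hw := hroot w hw.1
  convex := by
    rintro x ⟨a, ha, hax⟩ ⟨d, hd, hxd⟩
    exact ⟨hX x ⟨a, ha.1, hax⟩ ⟨d, hd.1, hxd⟩,
      hd.2.mono (Set.inter_subset_inter_left _ fun y hy => hxd.trans hy)⟩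
  infinite_descendants_inter z hz := by
    refine (infinite_setOf_infinite_descendants_inter hz.2).mono ?_
    rintro q ⟨hzq, hq⟩
    obtain ⟨d, hqd, hd⟩ := hq.nonempty
    exact ⟨hzq, hX q ⟨z, hz.1, hzq⟩ ⟨d, hd, hqd⟩, hq⟩

theorem IsViableFrom.sInter {𝒲 : Set (Set V)} (hchain : IsChain (· ⊆ ·) 𝒲)
    (hne : 𝒲.Nonempty) (h𝒲 : ∀ W ∈ 𝒲, G.IsViableFrom v W) :
    G.IsViableFrom v (⋂₀ 𝒲) where
  root_mem := Set.mem_sInter.mpr fun W hW => (h𝒲 W hW).root_mem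
  ancestor_of_mem w hw := by
    obtain ⟨W, hW⟩ := hne
    exact (h𝒲 W hW).ancestor_of_mem w (hw W hW)
  convex x ha hd W hW := by
    obtain ⟨a, ha, hax⟩ := ha
    obtain ⟨d, hd, hxd⟩ := hd
    exact (h𝒲 W hW).convex x ⟨a, ha W hW, hax⟩ ⟨d, hd W hW, hxd⟩
  infinite_descendants_inter z hz := by
    let P (x : V) : Prop := ∀ W ∈ 𝒲, x ∈ W ∧ (G.descendants x ∩ W).Infinite
    have hstep : ∀ x, P x → ∃ y, G.Edge x y ∧ P y := by
      intro x hx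
      obtain ⟨y, hxy, hy⟩ := exists_edge_forall_infinite_descendants_inter hchain hne
        fun W hW => (hx W hW).2
      refine ⟨y, hxy, fun W hW => ⟨?_, hy W hW⟩⟩
      obtain ⟨d, hyd, hd⟩ := (hy W hW).nonempty
      exact (h𝒲 W hW).convex y ⟨x, (hx W hW).1, .single hxy⟩ ⟨d, hd, hyd⟩
    refine (infinite_setOf_ancestor_of_forall_exists_edge hstep
      fun W hW => ⟨hz W hW, (h𝒲 W hW).infinite_descendants_inter z (hz W hW)⟩).mono ?_
    rintro y ⟨hzy, hy⟩
    exact ⟨hzy, Set.mem_sInter.mpr fun W hW => (hy W hW).1⟩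

theorem exists_minimal_isViableFrom (hv : (G.descendants v).Infinite) :
    ∃ S, Minimal (G.IsViableFrom v) S := by
  have hroot : ∀ w ∈ insert v (G.descendants v), w ≠ v → G.Ancestor v w :=
    fun w hw hne => hw.resolve_left hne
  have h₀ := isViableFrom_viablePart (Set.mem_insert v _) hroot (convex_insert_descendants v)
    (by simpa [Set.inter_eq_left.mpr (Set.subset_insert v _)] using hv)
  obtain ⟨S, -, hS⟩ := zorn_superset_nonempty {W | G.IsViableFrom v W}
    (fun 𝒲 h𝒲 hchain hne => ⟨⋂₀ 𝒲, IsViableFrom.sInter hchain hne h𝒲,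
      fun _ => Set.sInter_subset_of_mem⟩) _ h₀
  exact ⟨S, hS⟩

/-- Otherwise removing `z` and its descendants, then keeping the members with infinitely many
descendants left, would give a smaller viable set. -/
theorem finite_diff_descendants_of_minimal {S : Set V} (hS : Minimal (G.IsViableFrom v) S)
    (hz : z ∈ S) : (S \ G.descendants z).Finite := by
  rw [← Set.not_infinite]
  intro hinf
  have hS₀ := hS.prop
  let X := S \ insert z (G.descendants z)
  have hzv : z ≠ v := by
    rintro rfl
    exact hinf ((Set.finite_singleton z).subset fun w hw =>
      by_contra fun hne => hw.2 (hS₀.ancestor_of_mem w hw.1 hne))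
  have hvX : v ∈ X := by
    refine ⟨hS₀.root_mem, ?_⟩
    rintro (h | h)
    · exact hzv h.symm
    · exact ancestor_irrefl v ((hS₀.ancestor_of_mem z hz hzv).trans h)
  have hXconv : G.Convex X := by
    rintro x ⟨a, ha, hax⟩ ⟨d, hd, hxd⟩
    refine ⟨hS₀.convex x ⟨a, ha.1, hax⟩ ⟨d, hd.1, hxd⟩, ?_⟩
    rintro (rfl | hzx)
    · exact hd.2 (Or.inr hxd)
    · exact hd.2 (Or.inr (hzx.trans hxd))
  have hXinf : (G.descendants v ∩ X).Infinite := by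
    refine ((hinf.sdiff (Set.finite_singleton z)).sdiff (Set.finite_singleton v)).mono ?_
    rintro w ⟨⟨⟨hwS, hwz⟩, hwz'⟩, hwv⟩
    refine ⟨hS₀.ancestor_of_mem w hwS hwv, hwS, ?_⟩
    rintro (h | h)
    · exact hwz' h
    · exact hwz h
  have hpruned := isViableFrom_viablePart hvX
    (fun w hw => hS₀.ancestor_of_mem w hw.1) hXconv hXinf
  have hle : S ⊆ G.viablePart X := hS.2 hpruned fun w hw => hw.1.1
  exact (hle hz).1.2 (Set.mem_insert z _)

theorem exists_isCluster_of_infinite (hv : (G.descendants v).Infinite) :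
    ∃ S, v ∈ S ∧ G.IsCluster S := by
  obtain ⟨S, hS⟩ := exists_minimal_isViableFrom hv
  have hfin : ∀ z ∈ S, (S \ G.descendants z).Finite := fun z hz =>
    finite_diff_descendants_of_minimal hS hz
  refine ⟨S, hS.prop.root_mem, fun z hz => Or.inl (hfin z hz), hS.prop.convex,
    ⟨v, hS.prop.root_mem, hS.prop.ancestor_of_mem⟩, fun z hz _ => ?_⟩
  have hSinf : S.Infinite :=
    (hS.prop.infinite_descendants_inter v hS.prop.root_mem).mono Set.inter_subset_right
  exact (hSinf.sdiff (hfin z hz)).mono fun w hw => ⟨hw.1, by_contra fun h => hw.2 ⟨hw.1, h⟩⟩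

theorem exists_isCluster (G : InfiniteBiosphere V) (v : V) : ∃ S, v ∈ S ∧ G.IsCluster S := by
  rcases (G.descendants v).finite_or_infinite with hfin | hinf
  · refine ⟨insert v (G.descendants v), Set.mem_insert v _,
      fun _ _ => Or.inr ((hfin.insert v).subset fun w hw => hw.1),
      convex_insert_descendants v, ⟨v, Set.mem_insert v _, fun w hw hne => hw.resolve_left hne⟩,
      fun u hu hinf => absurd (hfin.subset fun w hw => ?_) hinf⟩
    rcases hu with rfl | hvu
    · exact hw
    · exact hvu.trans hw
  · exact exists_isCluster_of_infinite hinf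

theorem IsCluster.finite_diff_descendants (hS : G.IsCluster S) (hz : z ∈ S)
    (hinf : (G.descendants z).Infinite) : (S \ G.descendants z).Finite :=
  (hS.iap z hz).resolve_right (hS.reflection z hz hinf)

section Chain

variable {𝒞 : Set (Set V)}

theorem convex_sUnion (hchain : IsChain (· ⊆ ·) 𝒞) (h𝒞 : ∀ C ∈ 𝒞, G.IsCluster C) :
    G.Convex (⋃₀ 𝒞) := by
  rintro x ⟨a, ⟨A, hA, ha⟩, hax⟩ ⟨d, ⟨D, hD, hd⟩, hxd⟩
  obtain ⟨C, hC, hAC, hDC⟩ := hchain.directedOn A hA D hD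
  exact ⟨C, hC, (h𝒞 C hC).convex x ⟨a, hAC ha, hax⟩ ⟨d, hDC hd, hxd⟩⟩

/-- Among all common ancestors of members of the chain, one of least birthdate is a
common ancestor of the union. -/
theorem commonAncestorProp_sUnion (hchain : IsChain (· ⊆ ·) 𝒞)
    (h𝒞 : ∀ C ∈ 𝒞, G.IsCluster C) (hne : 𝒞.Nonempty) : G.CommonAncestorProp (⋃₀ 𝒞) := by
  let IsRoot (C : Set V) (c : V) : Prop := c ∈ C ∧ ∀ w ∈ C, w ≠ c → G.Ancestor c w
  obtain ⟨C₀, hC₀⟩ := hne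
  obtain ⟨c, ⟨C, hC, hc⟩, hmin⟩ :=
    exists_min_birthdate (G := G) (A := {c | ∃ C ∈ 𝒞, IsRoot C c})
    (by obtain ⟨c₀, hc₀⟩ := (h𝒞 C₀ hC₀).commonAncestor; exact ⟨c₀, C₀, hC₀, hc₀⟩)
  refine ⟨c, ⟨C, hC, hc.1⟩, ?_⟩
  rintro w ⟨C', hC', hw⟩ hwc
  rcases hchain.total hC' hC with hle | hle
  · exact hc.2 w (hle hw) hwc
  · obtain ⟨c', hc'⟩ := (h𝒞 C' hC').commonAncestor
    obtain rfl : c' = c := by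
      by_contra hne
      exact (hmin c' ⟨C', hC', hc'⟩).not_gt (hc'.2 c (hle hc.1) (Ne.symm hne)).t_lt_s19
    exact hc'.2 w hw hwc

/-- If `u` had infinitely many non-descendants in the union, König's lemma would give
infinitely many vertices below them and above the common ancestor; convexity puts them all
in a single member of the chain, which has only finitely many non-descendants of `u`. -/
theorem iap_sUnion (hchain : IsChain (· ⊆ ·) 𝒞) (h𝒞 : ∀ C ∈ 𝒞, G.IsCluster C)
    (hne : 𝒞.Nonempty) : G.IAP (⋃₀ 𝒞) := by
  intro u hu
  rcases (G.descendants u).finite_or_infinite with hfin | hinf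
  · exact Or.inr (hfin.subset fun w hw => hw.2)
  refine Or.inl ?_
  rw [← Set.not_infinite]
  intro hN
  let N := ⋃₀ 𝒞 \ G.descendants u
  obtain ⟨c, ⟨Cc, hCc, hc⟩, hroot⟩ := commonAncestorProp_sUnion hchain h𝒞 hne
  obtain ⟨Cu, hCu, hu⟩ := hu
  obtain ⟨C, hC, hCcC, hCuC⟩ := hchain.directedOn Cc hCc Cu hCu
  have hCinf : C.Infinite :=
    ((h𝒞 C hC).reflection u (hCuC hu) hinf).mono fun w hw => hw.1
  have hcN : (G.descendants c ∩ N).Infinite :=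
    (hN.sdiff (Set.finite_singleton c)).mono fun w hw => ⟨hroot w hw.1.1 hw.2, hw.1⟩
  refine ((infinite_setOf_infinite_descendants_inter hcN).mono ?_)
    (((h𝒞 C hC).finite_diff_descendants (hCuC hu) hinf))
  rintro q ⟨hcq, hq⟩
  obtain ⟨d, hqd, hdN⟩ := hq.nonempty
  obtain ⟨Cq, hCq, hqCq⟩ := convex_sUnion hchain h𝒞 q ⟨c, ⟨Cc, hCc, hc⟩, hcq⟩ ⟨d, hdN.1, hqd⟩
  obtain ⟨C', hC', hCqC', hCC'⟩ := hchain.directedOn Cq hCq C hC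
  have hqinf : (G.descendants q).Infinite := hq.mono Set.inter_subset_left
  obtain ⟨y, hyC, hy⟩ := (hCinf.sdiff ((h𝒞 C' hC').finite_diff_descendants (hCqC' hqCq)
    hqinf)).nonempty
  have hqy : G.Ancestor q y := by_contra fun h => hy ⟨hCC' hyC, h⟩
  exact ⟨(h𝒞 C hC).convex q ⟨c, hCcC hc, hcq⟩ ⟨y, hyC, hqy⟩,
    fun huq => hdN.2 (huq.trans hqd)⟩

theorem reflectionProp_sUnion (h𝒞 : ∀ C ∈ 𝒞, G.IsCluster C) : G.ReflectionProp (⋃₀ 𝒞) := by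
  rintro u ⟨C, hC, hu⟩ hinf
  exact ((h𝒞 C hC).reflection u hu hinf).mono fun w hw => ⟨⟨C, hC, hw.1⟩, hw.2⟩

theorem isCluster_sUnion (hchain : IsChain (· ⊆ ·) 𝒞) (h𝒞 : ∀ C ∈ 𝒞, G.IsCluster C)
    (hne : 𝒞.Nonempty) : G.IsCluster (⋃₀ 𝒞) :=
  ⟨iap_sUnion hchain h𝒞 hne, convex_sUnion hchain h𝒞,
    commonAncestorProp_sUnion hchain h𝒞 hne, reflectionProp_sUnion h𝒞⟩

end Chain

theorem exists_maximal_isCluster (G : InfiniteBiosphere V) (v : V) :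
    ∃ S, v ∈ S ∧ Maximal G.IsCluster S := by
  obtain ⟨S₀, hv, hS₀⟩ := G.exists_isCluster v
  obtain ⟨S, hS₀S, hS⟩ := zorn_subset_nonempty {S | G.IsCluster S}
    (fun 𝒞 h𝒞 hchain hne => ⟨⋃₀ 𝒞, isCluster_sUnion hchain h𝒞 hne,
      fun _ => Set.subset_sUnion_of_mem⟩) S₀ hS₀
  exact ⟨S, hS₀S hv, hS⟩

end InfiniteBiosphere

/-- Every organism inhabits an `IAP ∩ CONV ∩ CA ∩ REF`-maximal set. -/
theorem exists_maximal_specieslike_cluster {V : Type} (G : InfiniteBiosphere V)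
    (v : V) : ∃ S : Set V, IAPConvCaRefMaximal G S ∧ v ∈ S := by
  obtain ⟨S, hv, hS⟩ := G.exists_maximal_isCluster v
  refine ⟨S, ⟨⟨v, hv⟩, hS.prop.iap, hS.prop.convex, hS.prop.commonAncestor,
    hS.prop.reflection, fun S' hSS' hS' => ?_⟩, hv⟩
  exact hSS'.not_subset (hS.2 ⟨hS'.1, hS'.2.1, hS'.2.2.1, hS'.2.2.2⟩ hSS'.subset)
end
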